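/- arXiv:2404.06808 — 4 statements merged into one kernel-verified Lean document; each statement's English description precedes it below -/
import Mathlib

section
/- Assume the neighbor and remote sets are symmetric: j ∈ N_i ⟺ i ∈ N_j and j ∈ R_i ⟺ i ∈ R_j. Then the mollified system is the gradient flow of the potential φ_ε: at every configuration y = (y_1,…,y_n) ∈ (ℝ^d)^n with y_i ≠ y_j whenever j ∈ N_i ∪ R_i, and for every i = 1,…,n, the negative partial gradient of φ_ε with respect to y_i equals the i-th component of the vector field, i.e. −∇_{y_i} φ_ε(y) = Σ_{j∈N_i} (d_{ij} − ‖y_i − y_j‖)(y_i − y_j)/‖y_i − y_j‖ + λ Σ_{j∈R_i} f_ε(d̃_{ij} − ‖y_i − y_j‖)(y_i − y_j)/‖y_i − y_j‖. -/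
open scoped BigOperators

section helpers

variable {F : Type*} [NormedAddCommGroup F] [InnerProductSpace ℝ F] [CompleteSpace F]

omit [CompleteSpace F] in
lemma hasFDerivAt_norm' (x : F) (hx : x ≠ 0) :
    HasFDerivAt (fun y : F => ‖y‖) (‖x‖⁻¹ • innerSL ℝ x) x := by
  have hsq : (‖x‖ : ℝ)^2 ≠ 0 := pow_ne_zero _ (norm_ne_zero_iff.mpr hx)
  have h1 : HasFDerivAt (fun y : F => ‖y‖ ^ 2) (2 • innerSL ℝ x) x :=
    (hasStrictFDerivAt_norm_sq x).hasFDerivAt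
  have h2 := h1.sqrt hsq
  have heq : (fun y : F => Real.sqrt (‖y‖ ^ 2)) = fun y : F => ‖y‖ := by
    funext y; exact Real.sqrt_sq (norm_nonneg y)
  rw [heq] at h2
  convert h2 using 1
  rw [Real.sqrt_sq (norm_nonneg x)]
  ext w
  rw [two_smul]
  simp only [ContinuousLinearMap.smul_apply, ContinuousLinearMap.add_apply, smul_eq_mul]
  ring

lemma hasGradientAt_comp_norm_sub {c v : F} (hvc : v ≠ c) {h : ℝ → ℝ} {h' : ℝ}
    (hh : HasDerivAt h h' ‖v - c‖) :
    HasGradientAt (fun w => h ‖w - c‖) ((h' * ‖v - c‖⁻¹) • (v - c)) v := by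
  have h0 : v - c ≠ 0 := sub_ne_zero.mpr hvc
  have hsub : HasFDerivAt (fun w : F => w - c) (ContinuousLinearMap.id ℝ F) v := by
    simpa using (hasFDerivAt_id v).sub_const c
  have hnorm : HasFDerivAt (fun w : F => ‖w - c‖)
      ((‖v - c‖⁻¹ • innerSL ℝ (v - c)).comp (ContinuousLinearMap.id ℝ F)) v :=
    (hasFDerivAt_norm' _ h0).comp v hsub
  have hc := hh.comp_hasFDerivAt v hnorm
  rw [hasGradientAt_iff_hasFDerivAt]
  refine hc.congr_fderiv (Eq.symm ?_)
  ext w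
  simp only [InnerProductSpace.toDual_apply_apply, ContinuousLinearMap.smul_apply,
    ContinuousLinearMap.coe_comp', Function.comp_apply, ContinuousLinearMap.coe_id', id_eq,
    innerSL_apply_apply, smul_eq_mul]
  rw [real_inner_smul_left]
  ring

lemma HasGradientAt.sum' {ι : Type*} (s : Finset ι) {f : ι → F → ℝ} {g : ι → F} {x : F}
    (h : ∀ j ∈ s, HasGradientAt (f j) (g j) x) :
    HasGradientAt (fun v => ∑ j ∈ s, f j v) (∑ j ∈ s, g j) x := by
  rw [hasGradientAt_iff_hasFDerivAt]
  have hf := HasFDerivAt.fun_sum (fun j hj => (h j hj).hasFDerivAt)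
  refine hf.congr_fderiv (Eq.symm ?_)
  exact map_sum (InnerProductSpace.toDual ℝ F).toLinearEquiv.toLinearMap g s

lemma HasGradientAt.const_mul' {f : F → ℝ} {g : F} {x : F} (a : ℝ) (h : HasGradientAt f g x) :
    HasGradientAt (fun v => a * f v) (a • g) x := by
  rw [hasGradientAt_iff_hasFDerivAt] at h ⊢
  refine (h.const_mul a).congr_fderiv (Eq.symm ?_)
  ext w
  simp only [InnerProductSpace.toDual_apply_apply, ContinuousLinearMap.smul_apply, smul_eq_mul]
  rw [real_inner_smul_left]

lemma HasGradientAt.add' {f₁ f₂ : F → ℝ} {g₁ g₂ : F} {x : F}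
    (h₁ : HasGradientAt f₁ g₁ x) (h₂ : HasGradientAt f₂ g₂ x) :
    HasGradientAt (fun v => f₁ v + f₂ v) (g₁ + g₂) x := by
  rw [hasGradientAt_iff_hasFDerivAt] at h₁ h₂ ⊢
  refine (h₁.add h₂).congr_fderiv (Eq.symm ?_)
  ext w
  simp [inner_add_left]

lemma HasGradientAt.add_const' {f : F → ℝ} {g : F} {x : F}
    (h : HasGradientAt f g x) (C : ℝ) :
    HasGradientAt (fun v => f v + C) g x := by
  rw [hasGradientAt_iff_hasFDerivAt] at h ⊢
  exact h.add_const C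

lemma sum_split_at {ι M : Type*} [DecidableEq ι] [AddCommMonoid M]
    (s : Finset ι) (a : ι) (f : ι → M) :
    ∑ x ∈ s, f x = (∑ x ∈ s.erase a, f x) + (if a ∈ s then f a else 0) := by
  by_cases h : a ∈ s
  · rw [if_pos h, Finset.sum_erase_add s f h]
  · rw [if_neg h, Finset.erase_eq_of_notMem h, add_zero]

end helpers

/-- The right-hand side (vector field) of the mollified system:
`rhs N R D Dt lam fe y i = Σ_{j∈N_i} (d_{ij} − ‖y_i − y_j‖)(y_i − y_j)/‖y_i − y_j‖
  + λ Σ_{j∈R_i} f_ε(d̃_{ij} − ‖y_i − y_j‖)(y_i − y_j)/‖y_i − y_j‖`. -/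
noncomputable def rhs {n d : ℕ} (N R : Fin n → Finset (Fin n))
    (D Dt : Fin n → Fin n → ℝ) (lam : ℝ) (fe : ℝ → ℝ)
    (y : Fin n → EuclideanSpace ℝ (Fin d)) (i : Fin n) : EuclideanSpace ℝ (Fin d) :=
  (∑ j ∈ N i, (D i j - ‖y i - y j‖) • (‖y i - y j‖⁻¹ • (y i - y j)))
    + lam • ∑ j ∈ R i, fe (Dt i j - ‖y i - y j‖) • (‖y i - y j‖⁻¹ • (y i - y j))

/-- The potential `φ_ε(y) = (1/2) Σ_i [ (1/2) Σ_{j∈N_i} (d_{ij} − ‖y_i − y_j‖)²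
  + λ Σ_{j∈R_i} F_ε(d̃_{ij} − ‖y_i − y_j‖) ]`. -/
noncomputable def pot {n d : ℕ} (N R : Fin n → Finset (Fin n))
    (D Dt : Fin n → Fin n → ℝ) (lam : ℝ) (Fe : ℝ → ℝ)
    (y : Fin n → EuclideanSpace ℝ (Fin d)) : ℝ :=
  (1/2 : ℝ) * ∑ i, ((1/2 : ℝ) * ∑ j ∈ N i, (D i j - ‖y i - y j‖)^2
    + lam * ∑ j ∈ R i, Fe (Dt i j - ‖y i - y j‖))

/-- with symmetric neighbor and remote sets, the mollified system is the
gradient flow of the potential `φ_ε`: at every configuration with separated interacting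
points, `−∇_{y_i} φ_ε(y)` equals the `i`-th component of the vector field. -/
theorem mollified_system_is_gradient_flow
    {n d : ℕ} (hn : 1 ≤ n) (hd : 1 ≤ d)
    (N R : Fin n → Finset (Fin n))
    (hNi : ∀ i, i ∉ N i) (hRi : ∀ i, i ∉ R i)
    (hNsym : ∀ i j, j ∈ N i ↔ i ∈ N j) (hRsym : ∀ i j, j ∈ R i ↔ i ∈ R j)
    (D Dt : Fin n → Fin n → ℝ)
    (hD : ∀ i j, j ∈ N i → 0 < D i j) (hDsym : ∀ i j, D i j = D j i)
    (hDt : ∀ i j, j ∈ R i → 0 < Dt i j) (hDtsym : ∀ i j, Dt i j = Dt j i)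
    (ε lam : ℝ) (hε : 0 < ε) (hlam0 : 0 < lam) (hlam1 : lam ≤ 1)
    (fe Fe : ℝ → ℝ) (hfe_smooth : ContDiff ℝ (⊤ : ℕ∞) fe) (hfe_nonneg : ∀ x, 0 ≤ fe x)
    (hfe_eq : ∀ x, ε < |x| → fe x = max 0 x)
    (hfe_lb : ∀ x, |x| ≤ ε → max 0 x ≤ fe x)
    (hfe_ub : ∀ x, |x| ≤ ε → fe x ≤ (x + ε) / 2)
    (hFe : ∀ x, HasDerivAt Fe (fe x) x) (hFe0 : Fe 0 = 0)
    -- the configuration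
    (y : Fin n → EuclideanSpace ℝ (Fin d))
    (hsep : ∀ i j, j ∈ N i ∪ R i → y i ≠ y j) (i : Fin n) :
    -gradient (fun v => pot N R D Dt lam Fe (Function.update y i v)) (y i)
      = rhs N R D Dt lam fe y i := by
  classical
  set C : ℝ := (1/2:ℝ) * ∑ k ∈ Finset.univ.erase i,
      ((1/2:ℝ) * ∑ j ∈ (N k).erase i, (D k j - ‖y k - y j‖)^2
        + lam * ∑ j ∈ (R k).erase i, Fe (Dt k j - ‖y k - y j‖)) with hC
  -- Step 1: the potential, as a function of the i-th point, splits off a constant.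
  have hkey : ∀ v : EuclideanSpace ℝ (Fin d),
      pot N R D Dt lam Fe (Function.update y i v)
        = (((1/2:ℝ) * ∑ j ∈ N i, (D i j - ‖v - y j‖)^2)
            + lam * ∑ j ∈ R i, Fe (Dt i j - ‖v - y j‖)) + C := by
    intro v
    unfold pot
    have hui : Function.update y i v i = v := Function.update_self i v y
    have huj : ∀ j : Fin n, j ≠ i → Function.update y i v j = y j :=
      fun j hj => Function.update_of_ne hj v y
    have step1 : ∀ k ∈ Finset.univ.erase i,
        (1/2:ℝ) * ∑ j ∈ N k, (D k j - ‖Function.update y i v k - Function.update y i v j‖)^2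
          + lam * ∑ j ∈ R k, Fe (Dt k j - ‖Function.update y i v k - Function.update y i v j‖)
        = ((1/2:ℝ) * ∑ j ∈ (N k).erase i, (D k j - ‖y k - y j‖)^2
            + lam * ∑ j ∈ (R k).erase i, Fe (Dt k j - ‖y k - y j‖))
          + ((if i ∈ N k then (1/2:ℝ) * (D k i - ‖y k - v‖)^2 else 0)
            + (if i ∈ R k then lam * Fe (Dt k i - ‖y k - v‖) else 0)) := by
      intro k hk
      have hki : k ≠ i := Finset.ne_of_mem_erase hk
      rw [sum_split_at (N k) i, sum_split_at (R k) i]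
      have e1 : ∑ j ∈ (N k).erase i,
          (D k j - ‖Function.update y i v k - Function.update y i v j‖)^2
          = ∑ j ∈ (N k).erase i, (D k j - ‖y k - y j‖)^2 :=
        Finset.sum_congr rfl fun j hj => by
          rw [huj k hki, huj j (Finset.ne_of_mem_erase hj)]
      have e2 : ∑ j ∈ (R k).erase i,
          Fe (Dt k j - ‖Function.update y i v k - Function.update y i v j‖)
          = ∑ j ∈ (R k).erase i, Fe (Dt k j - ‖y k - y j‖) :=
        Finset.sum_congr rfl fun j hj => by
          rw [huj k hki, huj j (Finset.ne_of_mem_erase hj)]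
      rw [e1, e2, huj k hki, hui]
      rw [mul_add, mul_add, mul_ite, mul_zero, mul_ite, mul_zero]
      ring
    have etN : ∑ k ∈ Finset.univ.erase i,
        (if i ∈ N k then (1/2:ℝ) * (D k i - ‖y k - v‖)^2 else 0)
        = (1/2:ℝ) * ∑ j ∈ N i, (D i j - ‖v - y j‖)^2 := by
      have h1 : ∑ k ∈ Finset.univ.erase i,
          (if i ∈ N k then (1/2:ℝ) * (D k i - ‖y k - v‖)^2 else 0)
          = ∑ k : Fin n, (if i ∈ N k then (1/2:ℝ) * (D k i - ‖y k - v‖)^2 else 0) := by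
        rw [← Finset.sum_erase_add Finset.univ _ (Finset.mem_univ i), if_neg (hNi i), add_zero]
      rw [h1]
      have h2 : ∀ k : Fin n, (if i ∈ N k then (1/2:ℝ) * (D k i - ‖y k - v‖)^2 else 0)
          = (if k ∈ N i then (1/2:ℝ) * (D i k - ‖v - y k‖)^2 else 0) := by
        intro k
        by_cases h : k ∈ N i
        · rw [if_pos ((hNsym i k).mp h), if_pos h, hDsym k i, norm_sub_rev]
        · rw [if_neg (fun hh => h ((hNsym i k).mpr hh)), if_neg h]
      rw [Finset.sum_congr rfl (fun k _ => h2 k), Finset.sum_ite_mem, Finset.univ_inter,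
        Finset.mul_sum]
    have etR : ∑ k ∈ Finset.univ.erase i,
        (if i ∈ R k then lam * Fe (Dt k i - ‖y k - v‖) else 0)
        = lam * ∑ j ∈ R i, Fe (Dt i j - ‖v - y j‖) := by
      have h1 : ∑ k ∈ Finset.univ.erase i,
          (if i ∈ R k then lam * Fe (Dt k i - ‖y k - v‖) else 0)
          = ∑ k : Fin n, (if i ∈ R k then lam * Fe (Dt k i - ‖y k - v‖) else 0) := by
        rw [← Finset.sum_erase_add Finset.univ _ (Finset.mem_univ i), if_neg (hRi i), add_zero]
      rw [h1]
      have h2 : ∀ k : Fin n, (if i ∈ R k then lam * Fe (Dt k i - ‖y k - v‖) else 0)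
          = (if k ∈ R i then lam * Fe (Dt i k - ‖v - y k‖) else 0) := by
        intro k
        by_cases h : k ∈ R i
        · rw [if_pos ((hRsym i k).mp h), if_pos h, hDtsym k i, norm_sub_rev]
        · rw [if_neg (fun hh => h ((hRsym i k).mpr hh)), if_neg h]
      rw [Finset.sum_congr rfl (fun k _ => h2 k), Finset.sum_ite_mem, Finset.univ_inter,
        Finset.mul_sum]
    have eAi : (1/2:ℝ) * ∑ j ∈ N i,
          (D i j - ‖Function.update y i v i - Function.update y i v j‖)^2
        + lam * ∑ j ∈ R i, Fe (Dt i j - ‖Function.update y i v i - Function.update y i v j‖)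
        = (1/2:ℝ) * ∑ j ∈ N i, (D i j - ‖v - y j‖)^2
          + lam * ∑ j ∈ R i, Fe (Dt i j - ‖v - y j‖) := by
      congr 1
      · congr 1
        exact Finset.sum_congr rfl fun j hj => by
          rw [hui, huj j (fun h => hNi i (h ▸ hj))]
      · congr 1
        exact Finset.sum_congr rfl fun j hj => by
          rw [hui, huj j (fun h => hRi i (h ▸ hj))]
    rw [← Finset.sum_erase_add Finset.univ _ (Finset.mem_univ i),
      Finset.sum_congr rfl step1]
    simp only [Finset.sum_add_distrib]
    rw [etN, etR, eAi, hC]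
    simp only [Finset.sum_add_distrib]
    ring
  -- Step 2: compute the gradient of the variable part.
  have hgradN : HasGradientAt
      (fun v : EuclideanSpace ℝ (Fin d) => (1/2:ℝ) * ∑ j ∈ N i, (D i j - ‖v - y j‖)^2)
      ((1/2:ℝ) • ∑ j ∈ N i,
        ((2 * (‖y i - y j‖ - D i j) * ‖y i - y j‖⁻¹) • (y i - y j)))
      (y i) := by
    apply HasGradientAt.const_mul'
    apply HasGradientAt.sum'
    intro j hj
    have hne : y i ≠ y j := hsep i j (Finset.mem_union_left _ hj)
    have hder : HasDerivAt (fun t : ℝ => (D i j - t)^2)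
        (2 * (‖y i - y j‖ - D i j)) ‖y i - y j‖ := by
      have h1 : HasDerivAt (fun t : ℝ => D i j - t) (-1 : ℝ) ‖y i - y j‖ := by
        simpa using (hasDerivAt_id (‖y i - y j‖)).const_sub (D i j)
      have h2 := h1.pow 2
      refine h2.congr_deriv ?_
      norm_num
      ring
    exact hasGradientAt_comp_norm_sub hne hder
  have hgradR : HasGradientAt
      (fun v : EuclideanSpace ℝ (Fin d) => lam * ∑ j ∈ R i, Fe (Dt i j - ‖v - y j‖))
      (lam • ∑ j ∈ R i,
        ((-(fe (Dt i j - ‖y i - y j‖)) * ‖y i - y j‖⁻¹) • (y i - y j)))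
      (y i) := by
    apply HasGradientAt.const_mul'
    apply HasGradientAt.sum'
    intro j hj
    have hne : y i ≠ y j := hsep i j (Finset.mem_union_right _ hj)
    have hder : HasDerivAt (fun t : ℝ => Fe (Dt i j - t))
        (-(fe (Dt i j - ‖y i - y j‖))) ‖y i - y j‖ := by
      have h1 : HasDerivAt (fun t : ℝ => Dt i j - t) (-1 : ℝ) ‖y i - y j‖ := by
        simpa using (hasDerivAt_id (‖y i - y j‖)).const_sub (Dt i j)
      have h2 := (hFe (Dt i j - ‖y i - y j‖)).comp (‖y i - y j‖) h1
      simpa [Function.comp_def] using h2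
    exact hasGradientAt_comp_norm_sub hne hder
  have hT : HasGradientAt
      (fun v : EuclideanSpace ℝ (Fin d) =>
        (((1/2:ℝ) * ∑ j ∈ N i, (D i j - ‖v - y j‖)^2)
          + lam * ∑ j ∈ R i, Fe (Dt i j - ‖v - y j‖)) + C)
      (((1/2:ℝ) • ∑ j ∈ N i,
          ((2 * (‖y i - y j‖ - D i j) * ‖y i - y j‖⁻¹) • (y i - y j)))
        + lam • ∑ j ∈ R i,
          ((-(fe (Dt i j - ‖y i - y j‖)) * ‖y i - y j‖⁻¹) • (y i - y j)))
      (y i) := (hgradN.add' hgradR).add_const' C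
  have hψ : HasGradientAt
      (fun v : EuclideanSpace ℝ (Fin d) => pot N R D Dt lam Fe (Function.update y i v))
      (((1/2:ℝ) • ∑ j ∈ N i,
          ((2 * (‖y i - y j‖ - D i j) * ‖y i - y j‖⁻¹) • (y i - y j)))
        + lam • ∑ j ∈ R i,
          ((-(fe (Dt i j - ‖y i - y j‖)) * ‖y i - y j‖⁻¹) • (y i - y j)))
      (y i) := by
    have := funext hkey
    rw [this]
    exact hT
  rw [hψ.gradient]
  unfold rhs
  rw [neg_add]
  congr 1
  · rw [← neg_smul, Finset.smul_sum]
    refine Finset.sum_congr rfl fun j hj => ?_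
    module
  · rw [← smul_neg, ← Finset.sum_neg_distrib]
    congr 1
    refine Finset.sum_congr rfl fun j hj => ?_
    module
end

section
/- Assume the neighbor and remote sets are symmetric: j ∈ N_i ⟺ i ∈ N_j and j ∈ R_i ⟺ i ∈ R_j. Let y = (y_1,…,y_n) : [0,∞) → (ℝ^d)^n be a differentiable solution of the mollified system with y_i(t) ≠ y_j(t) for all t and all j ∈ N_i ∪ R_i. Then the potential is nonincreasing along the solution; more precisely, for every t ≥ 0, d/dt φ_ε(y(t)) = −Σ_{i=1}^n ‖ Σ_{j∈N_i} (d_{ij} − ‖y_i − y_j‖)(y_i − y_j)/‖y_i − y_j‖ + λ Σ_{j∈R_i} f_ε(d̃_{ij} − ‖y_i − y_j‖)(y_i − y_j)/‖y_i − y_j‖ ‖² ≤ 0. -/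
open scoped BigOperators

lemma aux_norm_deriv {E : Type*} [NormedAddCommGroup E] [InnerProductSpace ℝ E]
    {w : ℝ → E} {w' : E} {t : ℝ} (h : HasDerivAt w w' t) (hw : w t ≠ 0) :
    HasDerivAt (fun s => ‖w s‖) ((inner ℝ (w t) w' : ℝ) / ‖w t‖) t := by
  have hq : HasDerivAt (fun s => (inner ℝ (w s) (w s) : ℝ))
      ((inner ℝ (w t) w' : ℝ) + inner ℝ w' (w t)) t := h.inner ℝ h
  have hpos : (0:ℝ) < ‖w t‖ := norm_pos_iff.mpr hw
  have hne : (inner ℝ (w t) (w t) : ℝ) ≠ 0 := by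
    rw [real_inner_self_eq_norm_sq]; positivity
  have hs := (Real.hasDerivAt_sqrt hne).comp t hq
  have hfun : (fun s => Real.sqrt (inner ℝ (w s) (w s) : ℝ)) = fun s => ‖w s‖ := by
    funext s
    rw [real_inner_self_eq_norm_mul_norm, Real.sqrt_mul_self (norm_nonneg _)]
  rw [Function.comp_def, hfun] at hs
  refine hs.congr_deriv ?_
  have h1 : Real.sqrt (inner ℝ (w t) (w t) : ℝ) = ‖w t‖ := by
    rw [real_inner_self_eq_norm_mul_norm, Real.sqrt_mul_self (norm_nonneg _)]
  rw [h1, real_inner_comm w' (w t)]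
  field_simp
  ring

lemma pair_sum_identity {n : ℕ} {M : Type*} [NormedAddCommGroup M] [InnerProductSpace ℝ M]
    (Nt : Fin n → Finset (Fin n)) (hsym : ∀ i j, j ∈ Nt i ↔ i ∈ Nt j)
    (a : Fin n → Fin n → M) (ha : ∀ i j, j ∈ Nt i → a j i = - a i j)
    (v : Fin n → M) :
    ∑ i, ∑ j ∈ Nt i, (inner ℝ (a i j) (v i - v j) : ℝ)
      = 2 * ∑ i, (inner ℝ (∑ j ∈ Nt i, a i j) (v i) : ℝ) := by
  have h2 : ∑ i, ∑ j ∈ Nt i, (inner ℝ (a i j) (v j) : ℝ)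
      = -∑ i, ∑ j ∈ Nt i, (inner ℝ (a i j) (v i) : ℝ) := by
    rw [Finset.sum_comm' (t' := Finset.univ) (s' := Nt)
      (fun x y => by simp [hsym x y, and_comm])]
    rw [← Finset.sum_neg_distrib]
    refine Finset.sum_congr rfl fun i _ => ?_
    rw [← Finset.sum_neg_distrib]
    refine Finset.sum_congr rfl fun j hj => ?_
    rw [ha i j hj, inner_neg_left]
  calc ∑ i, ∑ j ∈ Nt i, (inner ℝ (a i j) (v i - v j) : ℝ)
      = ∑ i, ∑ j ∈ Nt i, ((inner ℝ (a i j) (v i) : ℝ) - inner ℝ (a i j) (v j)) := by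
        simp [inner_sub_right]
    _ = (∑ i, ∑ j ∈ Nt i, (inner ℝ (a i j) (v i) : ℝ))
        - ∑ i, ∑ j ∈ Nt i, (inner ℝ (a i j) (v j) : ℝ) := by
        rw [← Finset.sum_sub_distrib]
        exact Finset.sum_congr rfl fun i _ => Finset.sum_sub_distrib _ _
    _ = 2 * ∑ i, ∑ j ∈ Nt i, (inner ℝ (a i j) (v i) : ℝ) := by rw [h2]; ring
    _ = 2 * ∑ i, (inner ℝ (∑ j ∈ Nt i, a i j) (v i) : ℝ) := by
        simp [sum_inner]

/-- along a solution of the mollified system (with symmetric neighbor and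
remote sets), the potential is nonincreasing:
`d/dt φ_ε(y(t)) = −Σ_i ‖(vector field)_i‖² ≤ 0`. -/
theorem mollified_system_potential_nonincreasing
    {n d : ℕ} (hn : 1 ≤ n) (hd : 1 ≤ d)
    (N R : Fin n → Finset (Fin n))
    (hNi : ∀ i, i ∉ N i) (hRi : ∀ i, i ∉ R i)
    (hNsym : ∀ i j, j ∈ N i ↔ i ∈ N j) (hRsym : ∀ i j, j ∈ R i ↔ i ∈ R j)
    (D Dt : Fin n → Fin n → ℝ)
    (hD : ∀ i j, j ∈ N i → 0 < D i j) (hDsym : ∀ i j, D i j = D j i)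
    (hDt : ∀ i j, j ∈ R i → 0 < Dt i j) (hDtsym : ∀ i j, Dt i j = Dt j i)
    (ε lam : ℝ) (hε : 0 < ε) (hlam0 : 0 < lam) (hlam1 : lam ≤ 1)
    (fe Fe : ℝ → ℝ) (hfe_smooth : ContDiff ℝ (⊤ : ℕ∞) fe) (hfe_nonneg : ∀ x, 0 ≤ fe x)
    (hfe_eq : ∀ x, ε < |x| → fe x = max 0 x)
    (hfe_lb : ∀ x, |x| ≤ ε → max 0 x ≤ fe x)
    (hfe_ub : ∀ x, |x| ≤ ε → fe x ≤ (x + ε) / 2)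
    (hFe : ∀ x, HasDerivAt Fe (fe x) x) (hFe0 : Fe 0 = 0)
    -- the solution
    (y : ℝ → Fin n → EuclideanSpace ℝ (Fin d))
    (hsep : ∀ t, 0 ≤ t → ∀ i j, j ∈ N i ∪ R i → y t i ≠ y t j)
    (hsol : ∀ t, 0 ≤ t → ∀ i,
      HasDerivAt (fun s => y s i) (rhs N R D Dt lam fe (y t) i) t) :
    ∀ t, 0 ≤ t →
      HasDerivAt (fun s => pot N R D Dt lam Fe (y s))
        (-(∑ i, ‖rhs N R D Dt lam fe (y t) i‖^2)) t ∧
      -(∑ i, ‖rhs N R D Dt lam fe (y t) i‖^2) ≤ 0 := by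
  intro t ht
  classical
  refine ⟨?_, neg_nonpos.mpr (Finset.sum_nonneg fun i _ => sq_nonneg _)⟩
  set v : Fin n → EuclideanSpace ℝ (Fin d) := rhs N R D Dt lam fe (y t) with hvdef
  -- derivative of the pairwise distances
  have hderiv_r : ∀ i j, j ∈ N i ∪ R i →
      HasDerivAt (fun s => ‖y s i - y s j‖)
        ((inner ℝ (y t i - y t j) (v i - v j) : ℝ) / ‖y t i - y t j‖) t := fun i j hj =>
    aux_norm_deriv ((hsol t ht i).sub (hsol t ht j)) (sub_ne_zero.mpr (hsep t ht i j hj))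
  -- derivative of the potential, in raw combinator form
  have hpot : HasDerivAt (fun s => pot N R D Dt lam Fe (y s))
      ((1/2 : ℝ) * ∑ i, ((1/2 : ℝ) * (∑ j ∈ N i, (((2:ℕ):ℝ) * (D i j - ‖y t i - y t j‖)^(2-1) *
            (-((inner ℝ (y t i - y t j) (v i - v j) : ℝ) / ‖y t i - y t j‖))))
        + lam * (∑ j ∈ R i, (fe (Dt i j - ‖y t i - y t j‖) *
            (-((inner ℝ (y t i - y t j) (v i - v j) : ℝ) / ‖y t i - y t j‖)))))) t := by
    unfold pot
    refine HasDerivAt.const_mul _ (HasDerivAt.fun_sum fun i _ => HasDerivAt.add ?_ ?_)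
    · refine HasDerivAt.const_mul _ (HasDerivAt.fun_sum fun j hj => ?_)
      exact ((hderiv_r i j (Finset.mem_union_left _ hj)).const_sub (D i j)).pow 2
    · refine HasDerivAt.const_mul _ (HasDerivAt.fun_sum fun j hj => ?_)
      exact (hFe _).comp t ((hderiv_r i j (Finset.mem_union_right _ hj)).const_sub (Dt i j))
  -- the algebraic identification of the derivative
  set a : Fin n → Fin n → EuclideanSpace ℝ (Fin d) := fun i j =>
    (D i j - ‖y t i - y t j‖) • (‖y t i - y t j‖⁻¹ • (y t i - y t j)) with hadef
  set b : Fin n → Fin n → EuclideanSpace ℝ (Fin d) := fun i j =>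
    fe (Dt i j - ‖y t i - y t j‖) • (‖y t i - y t j‖⁻¹ • (y t i - y t j)) with hbdef
  have haskew : ∀ i j, j ∈ N i → a j i = - a i j := by
    intro i j _
    simp only [hadef]
    rw [hDsym j i, norm_sub_rev (y t j), ← neg_sub (y t i) (y t j), smul_neg, smul_neg]
  have hbskew : ∀ i j, j ∈ R i → b j i = - b i j := by
    intro i j _
    simp only [hbdef]
    rw [hDtsym j i, norm_sub_rev (y t j), ← neg_sub (y t i) (y t j), smul_neg, smul_neg]
  have hvi : ∀ i, v i = (∑ j ∈ N i, a i j) + lam • (∑ j ∈ R i, b i j) := fun i => rfl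
  have hinner_a : ∀ i j, (D i j - ‖y t i - y t j‖) *
      ((inner ℝ (y t i - y t j) (v i - v j) : ℝ) / ‖y t i - y t j‖)
      = (inner ℝ (a i j) (v i - v j) : ℝ) := by
    intro i j
    simp only [hadef, real_inner_smul_left]
    rw [div_eq_inv_mul]
  have hinner_b : ∀ i j, fe (Dt i j - ‖y t i - y t j‖) *
      ((inner ℝ (y t i - y t j) (v i - v j) : ℝ) / ‖y t i - y t j‖)
      = (inner ℝ (b i j) (v i - v j) : ℝ) := by
    intro i j
    simp only [hbdef, real_inner_smul_left]
    rw [div_eq_inv_mul]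
  have hN2 := pair_sum_identity N hNsym a haskew v
  have hR2 := pair_sum_identity R hRsym b hbskew v
  have key : (1/2 : ℝ) * ∑ i, ((1/2 : ℝ) * (∑ j ∈ N i, (((2:ℕ):ℝ) * (D i j - ‖y t i - y t j‖)^(2-1) *
            (-((inner ℝ (y t i - y t j) (v i - v j) : ℝ) / ‖y t i - y t j‖))))
        + lam * (∑ j ∈ R i, (fe (Dt i j - ‖y t i - y t j‖) *
            (-((inner ℝ (y t i - y t j) (v i - v j) : ℝ) / ‖y t i - y t j‖)))))
      = -(∑ i, ‖v i‖^2) := by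
    have step1 : ∀ i, (1/2 : ℝ) * (∑ j ∈ N i, (((2:ℕ):ℝ) * (D i j - ‖y t i - y t j‖)^(2-1) *
            (-((inner ℝ (y t i - y t j) (v i - v j) : ℝ) / ‖y t i - y t j‖))))
        + lam * (∑ j ∈ R i, (fe (Dt i j - ‖y t i - y t j‖) *
            (-((inner ℝ (y t i - y t j) (v i - v j) : ℝ) / ‖y t i - y t j‖))))
        = -((∑ j ∈ N i, (inner ℝ (a i j) (v i - v j) : ℝ))
            + lam * (∑ j ∈ R i, (inner ℝ (b i j) (v i - v j) : ℝ))) := by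
      intro i
      have e1 : ∀ j ∈ N i, ((2:ℕ):ℝ) * (D i j - ‖y t i - y t j‖)^(2-1) *
            (-((inner ℝ (y t i - y t j) (v i - v j) : ℝ) / ‖y t i - y t j‖))
          = -2 * (inner ℝ (a i j) (v i - v j) : ℝ) := by
        intro j _
        rw [← hinner_a i j]; push_cast; ring
      have e2 : ∀ j ∈ R i, fe (Dt i j - ‖y t i - y t j‖) *
            (-((inner ℝ (y t i - y t j) (v i - v j) : ℝ) / ‖y t i - y t j‖))
          = -(inner ℝ (b i j) (v i - v j) : ℝ) := by
        intro j _
        rw [← hinner_b i j]; ring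
      rw [Finset.sum_congr rfl e1, Finset.sum_congr rfl e2]
      rw [← Finset.mul_sum, Finset.sum_neg_distrib]
      ring
    rw [Finset.sum_congr rfl (fun i _ => step1 i)]
    rw [Finset.sum_neg_distrib, Finset.sum_add_distrib, ← Finset.mul_sum]
    rw [hN2, hR2]
    have e3 : ∀ i, (‖v i‖^2 : ℝ)
        = (inner ℝ (∑ j ∈ N i, a i j) (v i) : ℝ)
          + lam * (inner ℝ (∑ j ∈ R i, b i j) (v i) : ℝ) := by
      intro i
      have hv2 : (inner ℝ (v i) (v i) : ℝ)
          = inner ℝ ((∑ j ∈ N i, a i j) + lam • (∑ j ∈ R i, b i j)) (v i) := by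
        rw [← hvi i]
      rw [← real_inner_self_eq_norm_sq, hv2, inner_add_left, real_inner_smul_left]
    rw [show (∑ i, (‖v i‖^2 : ℝ)) = ∑ i, ((inner ℝ (∑ j ∈ N i, a i j) (v i) : ℝ)
          + lam * (inner ℝ (∑ j ∈ R i, b i j) (v i) : ℝ)) from
      Finset.sum_congr rfl fun i _ => e3 i]
    rw [Finset.sum_add_distrib, ← Finset.mul_sum]
    ring
  rw [← key]
  exact hpot
end

section
/- Let φ : ℝ^N → ℝ be continuously differentiable and let y : [0,∞) → ℝ^N be a differentiable solution of the gradient flow ẏ(t) = −∇φ(y(t)) whose Lojasiewicz auxiliary quantity is controlled as follows: suppose y_∞ ∈ ℝ^N, γ ∈ [1/2, 1), C_L > 0 and r > 0 are such that |φ(z) − φ(y_∞)|^γ ≤ C_L ‖∇φ(z)‖ for all z with ‖z − y_∞‖ < r, and φ(y(t)) > φ(y_∞) for t in an interval [T₀, T₁] during which ‖y(t) − y_∞‖ < r. Then the function f(t) = (φ(y(t)) − φ(y_∞))^{1−γ} satisfies the differential inequality df/dt ≤ −((1−γ)/C_L) ‖∇φ(y(t))‖ for t ∈ [T₀, T₁];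 consequently ∫_{T₀}^{t} ‖ẏ(s)‖ ds ≤ (C_L/(1−γ)) (f(T₀) − f(t)) for all t ∈ [T₀, T₁]. -/
/-!
Along the flow `ẏ = -∇φ(y)` the energy decreases at rate `d/dt φ(y) = -‖∇φ(y)‖²`. By the chain
rule, `f = (φ(y) - φ(y_∞))^{1-γ}` then has derivative `-(1-γ) ‖∇φ(y)‖² / (φ(y) - φ(y_∞))^γ`,
and the Lojasiewicz inequality bounds `‖∇φ(y)‖ / (φ(y) - φ(y_∞))^γ` below by `1/C_L`. This gives
`f' ≤ -((1-γ)/C_L) ‖ẏ‖`, and integrating bounds the length of the trajectory by the drop of `f`.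
-/

open Set MeasureTheory

theorem neg_sq_mul_rpow_le_of_lojasiewicz {a A γ C : ℝ} (ha : 0 < a) (hC : 0 < C) (hγ : γ ≤ 1)
    (hLoj : a ^ γ ≤ C * A) :
    -A ^ 2 * (1 - γ) * a ^ (1 - γ - 1) ≤ -((1 - γ) / C) * A := by
  have haγ : 0 < a ^ γ := Real.rpow_pos_of_pos ha γ
  have hA : 0 < A := pos_of_mul_pos_right (haγ.trans_le hLoj) hC.le
  have hratio : 1 / C ≤ A / a ^ γ := by
    rw [div_le_div_iff₀ hC haγ]
    linarith
  rw [show 1 - γ - 1 = -γ by ring, Real.rpow_neg ha.le]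
  calc -A ^ 2 * (1 - γ) * (a ^ γ)⁻¹ = -((1 - γ) * A) * (A / a ^ γ) := by ring
    _ ≤ -((1 - γ) * A) * (1 / C) :=
        mul_le_mul_of_nonpos_left hratio (by nlinarith)
    _ = -((1 - γ) / C) * A := by ring

section GradientFlow

variable {E : Type*} [NormedAddCommGroup E] [InnerProductSpace ℝ E] [CompleteSpace E]

theorem ContDiff.continuous_gradient {φ : E → ℝ} (hφ : ContDiff ℝ 1 φ) : Continuous (gradient φ) :=
  (InnerProductSpace.toDual ℝ E).symm.continuous.comp (hφ.continuous_fderiv one_ne_zero)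

theorem hasDerivAt_comp_gradient_flow {φ : E → ℝ} {y : ℝ → E} {t : ℝ}
    (hφ : DifferentiableAt ℝ φ (y t)) (hy : HasDerivAt y (-gradient φ (y t)) t) :
    HasDerivAt (fun s => φ (y s)) (-‖gradient φ (y t)‖ ^ 2) t := by
  have h := hφ.hasGradientAt.hasFDerivAt.comp_hasDerivAt t hy
  rwa [InnerProductSpace.toDual_apply_apply, inner_neg_right, real_inner_self_eq_norm_sq] at h

theorem exists_hasDerivAt_lojasiewicz_le {φ : E → ℝ} {y : ℝ → E} {z : E} {t γ C : ℝ}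
    (hφ : DifferentiableAt ℝ φ (y t)) (hy : HasDerivAt y (-gradient φ (y t)) t)
    (hpos : φ z < φ (y t)) (hLoj : |φ (y t) - φ z| ^ γ ≤ C * ‖gradient φ (y t)‖)
    (hC : 0 < C) (hγ : γ ≤ 1) :
    ∃ D, HasDerivAt (fun s => (φ (y s) - φ z) ^ (1 - γ)) D t ∧
      D ≤ -((1 - γ) / C) * ‖gradient φ (y t)‖ := by
  have hgap : 0 < φ (y t) - φ z := sub_pos.mpr hpos
  rw [abs_of_pos hgap] at hLoj
  exact ⟨_, ((hasDerivAt_comp_gradient_flow hφ hy).sub_const (φ z)).rpow_const (Or.inl hgap.ne'),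
    neg_sq_mul_rpow_le_of_lojasiewicz hgap hC hγ hLoj⟩

end GradientFlow

theorem integral_le_div_of_hasDerivAt_le {f u : ℝ → ℝ} {a b k : ℝ} (hab : a ≤ b) (hk : 0 < k)
    (hu : IntegrableOn u (Icc a b))
    (hf : ∀ x ∈ Icc a b, ∃ f', HasDerivAt f f' x ∧ f' ≤ -k * u x) :
    ∫ x in a..b, u x ≤ (f a - f b) / k := by
  choose! f' hf' hf'le using hf
  have hderiv : ∀ x ∈ Icc a b, HasDerivAt (fun x => -f x / k) (-f' x / k) x :=
    fun x hx => (hf' x hx).neg.div_const k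
  have hle := intervalIntegral.integral_le_sub_of_hasDeriv_right_of_le hab
    (fun x hx => (hderiv x hx).continuousAt.continuousWithinAt)
    (fun x hx => (hderiv x (Ioo_subset_Icc_self hx)).hasDerivWithinAt) hu
    (fun x hx => by
      rw [le_div_iff₀ hk]
      linarith [hf'le x (Ioo_subset_Icc_self hx)])
  linarith [show -f b / k - -f a / k = (f a - f b) / k by ring]

theorem lojasiewicz_auxiliary_decay_general {Nn : ℕ}
    (φ : EuclideanSpace ℝ (Fin Nn) → ℝ) (hφ : ContDiff ℝ 1 φ)
    (y y' : ℝ → EuclideanSpace ℝ (Fin Nn))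
    (hy : ∀ t, 0 ≤ t → HasDerivAt y (y' t) t)
    (hgf : ∀ t, 0 ≤ t → y' t = -gradient φ (y t))
    (y_inf : EuclideanSpace ℝ (Fin Nn)) (γ C_L r : ℝ)
    (hγ : γ ∈ Set.Ico (1/2 : ℝ) 1) (hCL : 0 < C_L)
    (hLoj : ∀ z, ‖z - y_inf‖ < r → |φ z - φ y_inf| ^ γ ≤ C_L * ‖gradient φ z‖)
    (T₀ T₁ : ℝ) (hT₀ : 0 ≤ T₀)
    (hpos : ∀ t ∈ Set.Icc T₀ T₁, φ y_inf < φ (y t))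
    (hin : ∀ t ∈ Set.Icc T₀ T₁, ‖y t - y_inf‖ < r) :
    (∀ t ∈ Set.Icc T₀ T₁,
      DifferentiableAt ℝ (fun s => (φ (y s) - φ y_inf) ^ (1 - γ)) t ∧
      deriv (fun s => (φ (y s) - φ y_inf) ^ (1 - γ)) t
        ≤ -((1 - γ) / C_L) * ‖gradient φ (y t)‖) ∧
    (∀ t ∈ Set.Icc T₀ T₁,
      ∫ s in T₀..t, ‖y' s‖
        ≤ (C_L / (1 - γ)) *
          ((φ (y T₀) - φ y_inf) ^ (1 - γ) - (φ (y t) - φ y_inf) ^ (1 - γ))) := by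
  have hflow : ∀ t, 0 ≤ t → HasDerivAt y (-gradient φ (y t)) t := fun t ht => hgf t ht ▸ hy t ht
  have hdecay : ∀ t ∈ Icc T₀ T₁, ∃ D,
      HasDerivAt (fun s => (φ (y s) - φ y_inf) ^ (1 - γ)) D t ∧
        D ≤ -((1 - γ) / C_L) * ‖gradient φ (y t)‖ := fun t ht =>
    exists_hasDerivAt_lojasiewicz_le (hφ.differentiable one_ne_zero _)
      (hflow t (hT₀.trans ht.1)) (hpos t ht) (hLoj _ (hin t ht)) hCL hγ.2.le
  refine ⟨fun t ht => ?_, fun t ht => ?_⟩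
  · obtain ⟨D, hD, hDle⟩ := hdecay t ht
    exact ⟨hD.differentiableAt, hD.deriv ▸ hDle⟩
  have hspeed : EqOn (fun s => ‖y' s‖) (fun s => ‖gradient φ (y s)‖) (uIcc T₀ t) := fun s hs => by
    rw [uIcc_of_le ht.1] at hs
    simp only [hgf s (hT₀.trans hs.1), norm_neg]
  have hcont : ContinuousOn (fun s => ‖gradient φ (y s)‖) (Icc T₀ t) :=
    (hφ.continuous_gradient.comp_continuousOn fun s hs =>
      (hflow s (hT₀.trans hs.1)).continuousAt.continuousWithinAt).norm
  rw [intervalIntegral.integral_congr hspeed]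
  refine (integral_le_div_of_hasDerivAt_le ht.1 (div_pos (by linarith [hγ.2]) hCL)
    (hcont.integrableOn_compact isCompact_Icc)
    fun s hs => hdecay s (Icc_subset_Icc_right ht.2 hs)).trans_eq ?_
  rw [div_div_eq_mul_div]
  ring

/-- along a gradient flow `ẏ = −∇φ(y)`, under the Lojasiewicz gradient
inequality near `y_∞` and `φ(y(t)) > φ(y_∞)` on `[T₀, T₁]` with `‖y(t) − y_∞‖ < r`, the
auxiliary function `f(t) = (φ(y(t)) − φ(y_∞))^{1−γ}` satisfies
`df/dt ≤ −((1−γ)/C_L) ‖∇φ(y(t))‖`, and consequently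
`∫_{T₀}^{t} ‖ẏ(s)‖ ds ≤ (C_L/(1−γ)) (f(T₀) − f(t))` for `t ∈ [T₀, T₁]`. -/
theorem lojasiewicz_auxiliary_decay {Nn : ℕ}
    (φ : EuclideanSpace ℝ (Fin Nn) → ℝ) (hφ : ContDiff ℝ 1 φ)
    (y y' : ℝ → EuclideanSpace ℝ (Fin Nn))
    (hy : ∀ t, 0 ≤ t → HasDerivAt y (y' t) t)
    (hgf : ∀ t, 0 ≤ t → y' t = -gradient φ (y t))
    (y_inf : EuclideanSpace ℝ (Fin Nn)) (γ C_L r : ℝ)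
    (hγ : γ ∈ Set.Ico (1/2 : ℝ) 1) (hCL : 0 < C_L) (hr : 0 < r)
    (hLoj : ∀ z, ‖z - y_inf‖ < r → |φ z - φ y_inf| ^ γ ≤ C_L * ‖gradient φ z‖)
    (T₀ T₁ : ℝ) (hT₀ : 0 ≤ T₀) (hT₀₁ : T₀ ≤ T₁)
    (hpos : ∀ t ∈ Set.Icc T₀ T₁, φ y_inf < φ (y t))
    (hin : ∀ t ∈ Set.Icc T₀ T₁, ‖y t - y_inf‖ < r) :
    (∀ t ∈ Set.Icc T₀ T₁,
      DifferentiableAt ℝ (fun s => (φ (y s) - φ y_inf) ^ (1 - γ)) t ∧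
      deriv (fun s => (φ (y s) - φ y_inf) ^ (1 - γ)) t
        ≤ -((1 - γ) / C_L) * ‖gradient φ (y t)‖) ∧
    (∀ t ∈ Set.Icc T₀ T₁,
      ∫ s in T₀..t, ‖y' s‖
        ≤ (C_L / (1 - γ)) *
          ((φ (y T₀) - φ y_inf) ^ (1 - γ) - (φ (y t) - φ y_inf) ^ (1 - γ))) :=
  lojasiewicz_auxiliary_decay_general φ hφ y y' hy hgf y_inf γ C_L r hγ hCL hLoj T₀ T₁ hT₀ hpos hin
end

section
/- Let φ : ℝ^N → ℝ be continuously differentiable and let y : [0,∞) → ℝ^N be a differentiable solution of the gradient flow ẏ(t) = −∇φ(y(t)) whose trajectory {y(t) : t ≥ 0} is bounded. Let y_∞ be an accumulation point of the trajectory, i.e. y(t_n) → y_∞ along some sequence t_n → ∞, and assume the Lojasiewicz gradient inequality holds at y_∞: there exist γ ∈ [1/2, 1), C_L > 0 and r > 0 such that |φ(z) − φ(y_∞)|^γ ≤ C_L ‖∇φ(z)‖ whenever ‖z − y_∞‖ < r. Then for every sufficiently small ε ∈ (0, r) there exists T₀ > 0 such that ‖y(t) − y_∞‖ < ε for all t ≥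 T₀. -/
/-!
Along the flow `φ ∘ y` decreases with derivative `-‖∇φ (y t)‖²`, and it stays above `φ y_inf`
because `y_inf` is an accumulation point. If the level `φ y_inf` is reached, the gradient vanishes
from then on and the trajectory rests at `y_inf`. Otherwise, as long as `y` stays within `r` of
`y_inf`, the Łojasiewicz inequality makes `C / (1 - γ) * (φ (y t) - φ y_inf) ^ (1 - γ)` decrease at
least as fast as `‖ẏ‖`, so it bounds the length of the remaining trajectory. Starting at a time
`tn k` where both `‖y (tn k) - y_inf‖` and this quantity are below `ε / 2`, the trajectory can
never leave the `ε`-ball.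
-/

open Filter Set Topology

theorem forall_Ici_lt_of_forall_Ico_lt {α β : Type*} [ConditionallyCompleteLinearOrder α]
    [TopologicalSpace α] [OrderTopology α] [LinearOrder β] [TopologicalSpace β]
    [OrderClosedTopology β] {f : α → β} {a : α} {ε : β} (hf : ContinuousOn f (Ici a))
    (h : ∀ b, a ≤ b → (∀ t ∈ Ico a b, f t < ε) → f b < ε) : ∀ t, a ≤ t → f t < ε := by
  by_contra! hexit
  set A := Ici a ∩ f ⁻¹' Ici ε
  have hA : IsClosed A := hf.preimage_isClosed_of_isClosed isClosed_Ici isClosed_Ici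
  have hAne : A.Nonempty := hexit
  have hAbdd : BddBelow A := ⟨a, fun _ ht => ht.1⟩
  have hfirst : sInf A ∈ A := hA.csInf_mem hAne hAbdd
  refine (h (sInf A) hfirst.1 fun t ht => ?_).not_ge hfirst.2
  by_contra! hge
  exact ht.2.not_ge (csInf_le hAbdd ⟨ht.1, hge⟩)

theorem norm_sub_le_sub_of_norm_deriv_le {E : Type*} [NormedAddCommGroup E] [NormedSpace ℝ E]
    {f f' : ℝ → E} {g g' : ℝ → ℝ} {a b : ℝ} (hab : a ≤ b)
    (hf : ContinuousOn f (Icc a b)) (hf' : ∀ t ∈ Ico a b, HasDerivAt f (f' t) t)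
    (hg : ContinuousOn g (Icc a b)) (hg' : ∀ t ∈ Ico a b, HasDerivAt g (g' t) t)
    (bound : ∀ t ∈ Ico a b, ‖f' t‖ ≤ -g' t) : ‖f b - f a‖ ≤ g a - g b :=
  image_norm_le_of_norm_deriv_right_le_deriv_boundary' (f := fun t => f t - f a)
    (B := fun t => g a - g t) (hf.sub continuousOn_const)
    (fun t ht => ((hf' t ht).sub_const _).hasDerivWithinAt) (by simp)
    (continuousOn_const.sub hg) (fun t ht => ((hg' t ht).const_sub _).hasDerivWithinAt)
    bound ⟨hab, le_rfl⟩

theorem le_mul_sq_mul_rpow_neg_of_rpow_le {U g C γ : ℝ} (hU : 0 < U) (hg : 0 ≤ g)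
    (hL : U ^ γ ≤ C * g) : g ≤ C * g ^ 2 * U ^ (-γ) := by
  rcases hg.eq_or_lt with rfl | hg
  · simp
  have hUγ : 0 < U ^ γ := Real.rpow_pos_of_pos hU γ
  rw [Real.rpow_neg hU.le, ← div_eq_mul_inv, le_div_iff₀ hUγ]
  nlinarith [mul_le_mul_of_nonneg_left hL hg.le]

section GradientFlow

variable {E : Type*} [NormedAddCommGroup E] [InnerProductSpace ℝ E] [CompleteSpace E]
  {φ : E → ℝ} {y : ℝ → E}

theorem hasDerivAt_comp_of_gradient_flow {t : ℝ} (hφ : DifferentiableAt ℝ φ (y t))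
    (hy : HasDerivAt y (-gradient φ (y t)) t) :
    HasDerivAt (fun s => φ (y s)) (-‖gradient φ (y t)‖ ^ 2) t := by
  have h := hφ.hasGradientAt.hasFDerivAt.comp_hasDerivAt t hy
  rwa [InnerProductSpace.toDual_apply_apply, inner_neg_right, real_inner_self_eq_norm_sq] at h

theorem antitoneOn_comp_of_gradient_flow (hφ : Differentiable ℝ φ)
    (hy : ∀ t, 0 ≤ t → HasDerivAt y (-gradient φ (y t)) t) :
    AntitoneOn (fun t => φ (y t)) (Ici 0) := by
  have hderiv t (ht : 0 ≤ t) := hasDerivAt_comp_of_gradient_flow (hφ (y t)) (hy t ht)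
  refine antitoneOn_of_deriv_nonpos (convex_Ici 0)
    (fun t ht => (hderiv t ht).continuousAt.continuousWithinAt)
    (fun t ht => (hderiv t (interior_subset ht)).differentiableAt.differentiableWithinAt)
    (fun t ht => ?_)
  rw [(hderiv t (interior_subset ht)).deriv]
  exact neg_nonpos.mpr (sq_nonneg _)

theorem le_comp_of_gradient_flow {p : E} {tn : ℕ → ℝ} (hφ : Differentiable ℝ φ)
    (hy : ∀ t, 0 ≤ t → HasDerivAt y (-gradient φ (y t)) t) (htn : Tendsto tn atTop atTop)
    (hp : Tendsto (fun k => y (tn k)) atTop (𝓝 p)) {t : ℝ} (ht : 0 ≤ t) : φ p ≤ φ (y t) :=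
  le_of_tendsto ((hφ.continuous.tendsto p).comp hp) <| (htn.eventually_ge_atTop t).mono
    fun _ hk => antitoneOn_comp_of_gradient_flow hφ hy ht (ht.trans hk) hk

theorem norm_sub_le_of_lojasiewicz {c γ C a b : ℝ} (hφ : Differentiable ℝ φ)
    (hy : ∀ t ∈ Icc a b, HasDerivAt y (-gradient φ (y t)) t) (hab : a ≤ b) (hγ : γ < 1)
    (hpos : ∀ t ∈ Ico a b, c < φ (y t))
    (hL : ∀ t ∈ Ico a b, (φ (y t) - c) ^ γ ≤ C * ‖gradient φ (y t)‖) :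
    ‖y b - y a‖ ≤
      C / (1 - γ) * (φ (y a) - c) ^ (1 - γ) - C / (1 - γ) * (φ (y b) - c) ^ (1 - γ) := by
  have hγ' : 0 < 1 - γ := sub_pos.mpr hγ
  have hderiv t (ht : t ∈ Icc a b) := hasDerivAt_comp_of_gradient_flow (hφ (y t)) (hy t ht)
  refine norm_sub_le_sub_of_norm_deriv_le hab
    (fun t ht => (hy t ht).continuousAt.continuousWithinAt)
    (fun t ht => hy t (Ico_subset_Icc_self ht))
    (fun t ht => (((hderiv t ht).continuousAt.sub continuousAt_const).rpow_const
      (Or.inr hγ'.le)).const_mul _ |>.continuousWithinAt)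
    (fun t ht => (((hderiv t (Ico_subset_Icc_self ht)).sub_const c).rpow_const
      (Or.inl (sub_pos.mpr (hpos t ht)).ne')).const_mul _) (fun t ht => ?_)
  have hbound := le_mul_sq_mul_rpow_neg_of_rpow_le (sub_pos.mpr (hpos t ht)) (norm_nonneg _)
    (hL t ht)
  rw [norm_neg, sub_sub_cancel_left]
  convert hbound using 1
  field_simp

theorem gradient_flow_trapped {p : E} {γ C r ε a : ℝ} (hφ : Differentiable ℝ φ)
    (hy : ∀ t, a ≤ t → HasDerivAt y (-gradient φ (y t)) t) (hγ : γ < 1) (hC : 0 ≤ C)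
    (hεr : ε ≤ r) (hpos : ∀ t, a ≤ t → φ p < φ (y t))
    (hLoj : ∀ z, ‖z - p‖ < r → |φ z - φ p| ^ γ ≤ C * ‖gradient φ z‖)
    (hstart : ‖y a - p‖ < ε / 2) (hsmall : C / (1 - γ) * (φ (y a) - φ p) ^ (1 - γ) < ε / 2) :
    ∀ t, a ≤ t → ‖y t - p‖ < ε := by
  refine forall_Ici_lt_of_forall_Ico_lt
    (fun t ht => ((hy t ht).continuousAt.sub continuousAt_const).norm.continuousWithinAt)
    fun b hab htrapped => ?_
  have hlength := norm_sub_le_of_lojasiewicz hφ (fun t ht => hy t ht.1) hab hγ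
    (fun t ht => hpos t ht.1) fun t ht => by
      simpa only [abs_of_pos (sub_pos.mpr (hpos t ht.1))] using
        hLoj (y t) ((htrapped t ht).trans_le hεr)
  have hend : 0 ≤ C / (1 - γ) * (φ (y b) - φ p) ^ (1 - γ) :=
    mul_nonneg (div_nonneg hC (sub_pos.mpr hγ).le)
      (Real.rpow_nonneg (sub_pos.mpr (hpos b hab)).le _)
  calc ‖y b - p‖ ≤ ‖y b - y a‖ + ‖y a - p‖ := norm_sub_le_norm_sub_add_norm_sub _ _ _
    _ < ε := by linarith

theorem gradient_flow_eventually_trapped_of_lt {p : E} {tn : ℕ → ℝ} {γ C r ε : ℝ}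
    (hφ : Differentiable ℝ φ) (hy : ∀ t, 0 ≤ t → HasDerivAt y (-gradient φ (y t)) t)
    (htn : Tendsto tn atTop atTop) (hp : Tendsto (fun k => y (tn k)) atTop (𝓝 p))
    (hpos : ∀ t, 0 ≤ t → φ p < φ (y t)) (hγ : γ < 1) (hC : 0 ≤ C) (hε : 0 < ε) (hεr : ε ≤ r)
    (hLoj : ∀ z, ‖z - p‖ < r → |φ z - φ p| ^ γ ≤ C * ‖gradient φ z‖) :
    ∃ T₀, 0 < T₀ ∧ ∀ t, T₀ ≤ t → ‖y t - p‖ < ε := by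
  have hsmall : Tendsto (fun k => C / (1 - γ) * (φ (y (tn k)) - φ p) ^ (1 - γ)) atTop (𝓝 0) := by
    have hcont : ContinuousAt (fun u : ℝ => C / (1 - γ) * u ^ (1 - γ)) 0 :=
      (Real.continuousAt_rpow_const 0 _ (Or.inr (sub_pos.mpr hγ).le)).const_mul _
    have hgap : Tendsto (fun k => φ (y (tn k)) - φ p) atTop (𝓝 0) := by
      simpa using ((hφ.continuous.tendsto p).comp hp).sub_const (φ p)
    simpa [Function.comp_def, Real.zero_rpow (sub_pos.mpr hγ).ne'] using hcont.tendsto.comp hgap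
  obtain ⟨k, hk1, hkball, hksmall⟩ := ((htn.eventually_ge_atTop 1).and
    ((hp.eventually (Metric.ball_mem_nhds p (half_pos hε))).and
      (hsmall.eventually (gt_mem_nhds (half_pos hε))))).exists
  exact ⟨tn k, by linarith, gradient_flow_trapped hφ (fun t ht => hy t (by linarith)) hγ hC hεr
    (fun t ht => hpos t (by linarith)) hLoj (by rwa [← dist_eq_norm]) hksmall⟩

theorem gradient_eq_zero_of_comp_eq {t₀ : ℝ} (hφ : Differentiable ℝ φ)
    (hy : ∀ t, t₀ ≤ t → HasDerivAt y (-gradient φ (y t)) t)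
    (hconst : ∀ t, t₀ ≤ t → φ (y t) = φ (y t₀)) {t : ℝ} (ht : t₀ < t) :
    gradient φ (y t) = 0 := by
  have hzero : HasDerivAt (fun s => φ (y s)) 0 t :=
    (hasDerivAt_const t _).congr_of_eventuallyEq <|
      (eventually_gt_nhds ht).mono fun s hs => hconst s hs.le
  have hsq := (hasDerivAt_comp_of_gradient_flow (hφ (y t)) (hy t ht.le)).unique hzero
  simpa using hsq

theorem gradient_flow_eq_of_comp_eq {p : E} {t₀ : ℝ} {tn : ℕ → ℝ} (hφ : Differentiable ℝ φ)
    (hy : ∀ t, t₀ ≤ t → HasDerivAt y (-gradient φ (y t)) t)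
    (hconst : ∀ t, t₀ ≤ t → φ (y t) = φ (y t₀)) (htn : Tendsto tn atTop atTop)
    (hp : Tendsto (fun k => y (tn k)) atTop (𝓝 p)) {t : ℝ} (ht : t₀ < t) : y t = p := by
  have hderiv s (hs : s ∈ Ioi t₀) : HasDerivAt y 0 s := by
    simpa [gradient_eq_zero_of_comp_eq hφ hy hconst hs] using hy s (le_of_lt hs)
  have hconst_y s (hs : t₀ < s) : y s = y t :=
    isOpen_Ioi.is_const_of_deriv_eq_zero isPreconnected_Ioi
      (fun s hs => (hderiv s hs).differentiableAt.differentiableWithinAt)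
      (fun s hs => (hderiv s hs).deriv) hs ht
  refine tendsto_nhds_unique (tendsto_const_nhds.congr' ?_) hp
  exact (htn.eventually_gt_atTop t₀).mono fun k hk => (hconst_y _ hk).symm

end GradientFlow

theorem gradient_flow_eventually_trapped_general {Nn : ℕ}
    (φ : EuclideanSpace ℝ (Fin Nn) → ℝ) (hφ : ContDiff ℝ 1 φ)
    (y y' : ℝ → EuclideanSpace ℝ (Fin Nn))
    (hy : ∀ t, 0 ≤ t → HasDerivAt y (y' t) t)
    (hgf : ∀ t, 0 ≤ t → y' t = -gradient φ (y t))
    (y_inf : EuclideanSpace ℝ (Fin Nn))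
    (hacc : ∃ tn : ℕ → ℝ, (∀ k, 0 ≤ tn k) ∧ Tendsto tn atTop atTop ∧
      Tendsto (fun k => y (tn k)) atTop (nhds y_inf))
    (γ C_L r : ℝ) (hγ : γ ∈ Set.Ico (1/2 : ℝ) 1) (hCL : 0 < C_L) (hr : 0 < r)
    (hLoj : ∀ z, ‖z - y_inf‖ < r → |φ z - φ y_inf| ^ γ ≤ C_L * ‖gradient φ z‖) :
    ∃ ε₀ : ℝ, 0 < ε₀ ∧ ε₀ ≤ r ∧ ∀ ε : ℝ, 0 < ε → ε < ε₀ →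
      ∃ T₀ : ℝ, 0 < T₀ ∧ ∀ t, T₀ ≤ t → ‖y t - y_inf‖ < ε := by
  obtain ⟨tn, -, htn, hytn⟩ := hacc
  have hflow : ∀ t, 0 ≤ t → HasDerivAt y (-gradient φ (y t)) t := fun t ht => hgf t ht ▸ hy t ht
  have hφ' : Differentiable ℝ φ := hφ.differentiable one_ne_zero
  have hlb : ∀ t, 0 ≤ t → φ y_inf ≤ φ (y t) := fun t =>
    le_comp_of_gradient_flow hφ' hflow htn hytn
  refine ⟨r, hr, le_rfl, fun ε hε hεr => ?_⟩
  by_cases hlevel : ∃ t₀, 0 ≤ t₀ ∧ φ (y t₀) = φ y_inf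
  · obtain ⟨t₀, ht₀, hlevel⟩ := hlevel
    have hconst : ∀ t, t₀ ≤ t → φ (y t) = φ (y t₀) := fun t ht =>
      le_antisymm (antitoneOn_comp_of_gradient_flow hφ' hflow ht₀ (ht₀.trans ht) ht)
        (hlevel ▸ hlb t (ht₀.trans ht))
    refine ⟨t₀ + 1, by linarith, fun t ht => ?_⟩
    rwa [gradient_flow_eq_of_comp_eq hφ' (fun t ht => hflow t (ht₀.trans ht)) hconst htn hytn
      (by linarith), sub_self, norm_zero]
  push Not at hlevel
  exact gradient_flow_eventually_trapped_of_lt hφ' hflow htn hytn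
    (fun t ht => (hlb t ht).lt_of_ne (hlevel t ht).symm) hγ.2 hCL.le hε hεr.le hLoj

/-- for a bounded gradient-flow trajectory `ẏ = −∇φ(y)` with an accumulation
point `y_∞` at which the Lojasiewicz gradient inequality holds, for every sufficiently
small `ε ∈ (0, r)` there exists `T₀ > 0` such that `‖y(t) − y_∞‖ < ε` for all `t ≥ T₀`. -/
theorem gradient_flow_eventually_trapped {Nn : ℕ}
    (φ : EuclideanSpace ℝ (Fin Nn) → ℝ) (hφ : ContDiff ℝ 1 φ)
    (y y' : ℝ → EuclideanSpace ℝ (Fin Nn))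
    (hy : ∀ t, 0 ≤ t → HasDerivAt y (y' t) t)
    (hgf : ∀ t, 0 ≤ t → y' t = -gradient φ (y t))
    (hbd : ∃ M : ℝ, ∀ t, 0 ≤ t → ‖y t‖ ≤ M)
    (y_inf : EuclideanSpace ℝ (Fin Nn))
    (hacc : ∃ tn : ℕ → ℝ, (∀ k, 0 ≤ tn k) ∧ Tendsto tn atTop atTop ∧
      Tendsto (fun k => y (tn k)) atTop (nhds y_inf))
    (γ C_L r : ℝ) (hγ : γ ∈ Set.Ico (1/2 : ℝ) 1) (hCL : 0 < C_L) (hr : 0 < r)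
    (hLoj : ∀ z, ‖z - y_inf‖ < r → |φ z - φ y_inf| ^ γ ≤ C_L * ‖gradient φ z‖) :
    ∃ ε₀ : ℝ, 0 < ε₀ ∧ ε₀ ≤ r ∧ ∀ ε : ℝ, 0 < ε → ε < ε₀ →
      ∃ T₀ : ℝ, 0 < T₀ ∧ ∀ t, T₀ ≤ t → ‖y t - y_inf‖ < ε :=
  gradient_flow_eventually_trapped_general φ hφ y y' hy hgf y_inf hacc γ C_L r hγ hCL hr hLoj
end
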